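/- arXiv:2304.09086 — 2 statements merged into one kernel-verified Lean document; each statement's English description precedes it below -/
import Mathlib

section
/- Let σ > 0, β < 0, ω > 0, q(ω) = (2^{2σ+1}ω^{σ+1/2}/(-β))^{1/(2σ)}, and u_ω = q(ω)·G_ω with G_ω(x) = e^{-√ω|x|}/(2√ω). Then the mass M(ω) = ‖u_ω‖²_{L²(ℝ)} = q(ω)²/(4ω^{3/2}) is: (i) strictly increasing in ω if σ < 1, (ii) strictly decreasing in ω if σ > 1, and (iii) constant equal to -2/β if σ = 1. -/
open Real Set

/-!
Writing `q(ω)^{2σ} = c ω^{σ+1/2}` with `c = 2^{2σ+1}/(-β)`, the mass is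
`M(ω) = c^{1/σ} ω^{1/σ + 1/2 - 3/2} / 4 = (c^{1/σ}/4) ω^{(1-σ)/(2σ)}`,
a positive multiple of a power of `ω` whose exponent has the sign of `1 - σ`.
-/

theorem rpow_one_div_two_mul_sq_div (c ω σ : ℝ) (hc : 0 ≤ c) (hω : 0 < ω) (hσ : σ ≠ 0) :
    ((c * ω ^ (σ + 1 / 2)) ^ (1 / (2 * σ))) ^ 2 / (4 * ω ^ ((3 : ℝ) / 2)) =
      c ^ σ⁻¹ / 4 * ω ^ ((1 - σ) / (2 * σ)) := by
  have hexp : 1 / (2 * σ) * (2 : ℕ) = σ⁻¹ := by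
    push_cast
    field_simp
  have hsplit : (σ + 1 / 2) * σ⁻¹ = 3 / 2 + (1 - σ) / (2 * σ) := by
    field_simp
    ring
  rw [← rpow_natCast, ← rpow_mul (by positivity), hexp, mul_rpow hc (by positivity),
    ← rpow_mul hω.le, hsplit, rpow_add hω]
  field_simp

theorem strictMonoOn_const_mul_rpow {K p : ℝ} (hK : 0 < K) (hp : 0 < p) :
    StrictMonoOn (fun x : ℝ => K * x ^ p) (Ioi 0) :=
  fun _ hx _ _ hxy => mul_lt_mul_of_pos_left (rpow_lt_rpow (le_of_lt hx) hxy hp) hK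

theorem strictAntiOn_const_mul_rpow {K p : ℝ} (hK : 0 < K) (hp : p < 0) :
    StrictAntiOn (fun x : ℝ => K * x ^ p) (Ioi 0) :=
  fun _ hx _ _ hxy => mul_lt_mul_of_pos_left (rpow_lt_rpow_of_neg hx hxy hp) hK

/-- Monotonicity of the mass `M(ω) = q(ω)²/(4ω^{3/2})` of the 1D bound state
`u_ω = q(ω) G_ω`: increasing for `σ < 1`, decreasing for `σ > 1`, and constantly
equal to the critical mass `-2/β` for `σ = 1`. -/
theorem bound_state_mass_1d (σ β : ℝ) (hσ : 0 < σ) (hβ : β < 0)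
    (q M : ℝ → ℝ)
    (hq : ∀ ω, q ω = ((2 : ℝ) ^ (2 * σ + 1) * ω ^ (σ + 1 / 2) / (-β)) ^ (1 / (2 * σ)))
    (hM : ∀ ω, M ω = (q ω) ^ 2 / (4 * ω ^ ((3 : ℝ) / 2))) :
    (σ < 1 → StrictMonoOn M (Ioi 0)) ∧
    (1 < σ → StrictAntiOn M (Ioi 0)) ∧
    (σ = 1 → ∀ ω : ℝ, 0 < ω → M ω = -2 / β) := by
  set c : ℝ := (2 : ℝ) ^ (2 * σ + 1) / (-β)
  have hc : 0 < c := div_pos (by positivity) (neg_pos.mpr hβ)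
  have hK : 0 < c ^ σ⁻¹ / 4 := by positivity
  have hMpow : EqOn (fun ω => c ^ σ⁻¹ / 4 * ω ^ ((1 - σ) / (2 * σ))) M (Ioi 0) := by
    intro ω hω
    rw [hM, hq, mul_div_right_comm]
    exact (rpow_one_div_two_mul_sq_div c ω σ hc.le hω hσ.ne').symm
  refine ⟨fun hσ_lt => ?_, fun hσ_gt => ?_, fun hσ_eq ω hω => ?_⟩
  · exact (strictMonoOn_const_mul_rpow hK (by apply div_pos <;> linarith)).congr hMpow
  · exact (strictAntiOn_const_mul_rpow hK
      (div_neg_of_neg_of_pos (by linarith) (by linarith))).congr hMpow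
  · subst hσ_eq
    rw [← hMpow hω]
    norm_num [c]
    ring
end

section
/- Fix β < 0 and σ > 0, and define on (4e^{-2γ}, ∞) the 2D bound-state mass M(ω) = q(ω)²·‖G_ω‖²_{L²(ℝ²)} where q(ω) = ((log(√ω/2)+γ)/(-2πβ))^{1/(2σ)} and ‖G_ω‖²_{L²(ℝ²)} = 1/(4πω). Then M is strictly increasing on (4e^{-2γ}, 4e^{-2γ+1/σ}], strictly decreasing on [4e^{-2γ+1/σ}, ∞), and M(ω) → 0 both as ω → 4e^{-2γ} from above and as ω → ∞. -/
open Real Set Filter Topology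

/-!
With `A = 4e^{-2γ}` and `t = log(√ω/2) + γ = log(ω/A)/2` we have `ω = A e^{2t}`, so for `ω ≥ A`
the mass is a positive multiple of `t^{1/σ} e^{-2t}`. This profile has derivative
`t^{1/σ-1} e^{-2t} (1/σ - 2t)`, so it increases up to `t = 1/(2σ)`, i.e. `ω = A e^{1/σ}`, and
decreases afterwards; it vanishes at `t = 0` and as `t → ∞`.
-/

section RpowMulExpNeg

variable {p a : ℝ}

theorem hasDerivAt_rpow_mul_exp_neg_mul {t : ℝ} (ht : 0 < t) :
    HasDerivAt (fun x => x ^ p * exp (-a * x)) (t ^ (p - 1) * exp (-a * t) * (p - a * t)) t := by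
  have hpow : HasDerivAt (fun x => x ^ p) (p * t ^ (p - 1)) t :=
    hasDerivAt_rpow_const (Or.inl ht.ne')
  have hexp : HasDerivAt (fun x => exp (-a * x)) (exp (-a * t) * -a) t := by
    simpa using ((hasDerivAt_id t).const_mul (-a)).exp
  refine (hpow.mul hexp).congr_deriv ?_
  rw [show t ^ p = t ^ (p - 1) * t by rw [← rpow_add_one ht.ne', sub_add_cancel]]
  ring

theorem continuous_rpow_mul_exp_neg_mul (hp : 0 < p) :
    Continuous (fun x => x ^ p * exp (-a * x)) :=
  (continuous_id.rpow_const fun _ => Or.inr hp.le).mul (by fun_prop)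

theorem strictMonoOn_rpow_mul_exp_neg_mul (hp : 0 < p) (ha : 0 < a) :
    StrictMonoOn (fun x => x ^ p * exp (-a * x)) (Icc 0 (p / a)) := by
  refine strictMonoOn_of_deriv_pos (convex_Icc 0 _)
    (continuous_rpow_mul_exp_neg_mul hp).continuousOn fun t ht => ?_
  rw [interior_Icc] at ht
  rw [(hasDerivAt_rpow_mul_exp_neg_mul ht.1).deriv]
  have : a * t < p := (lt_div_iff₀' ha).1 ht.2
  exact mul_pos (mul_pos (rpow_pos_of_pos ht.1 _) (exp_pos _)) (by linarith)

theorem strictAntiOn_rpow_mul_exp_neg_mul (hp : 0 < p) (ha : 0 < a) :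
    StrictAntiOn (fun x => x ^ p * exp (-a * x)) (Ici (p / a)) := by
  refine strictAntiOn_of_deriv_neg (convex_Ici _)
    (continuous_rpow_mul_exp_neg_mul hp).continuousOn fun t ht => ?_
  rw [interior_Ici] at ht
  have ht0 : 0 < t := (div_pos hp ha).trans ht
  rw [(hasDerivAt_rpow_mul_exp_neg_mul ht0).deriv]
  have : p < a * t := (div_lt_iff₀' ha).1 ht
  exact mul_neg_of_pos_of_neg (mul_pos (rpow_pos_of_pos ht0 _) (exp_pos _)) (by linarith)

theorem tendsto_rpow_mul_exp_neg_mul_nhds_zero (hp : 0 < p) :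
    Tendsto (fun x => x ^ p * exp (-a * x)) (𝓝 0) (𝓝 0) := by
  simpa [zero_rpow hp.ne'] using (continuous_rpow_mul_exp_neg_mul (a := a) hp).tendsto 0

end RpowMulExpNeg

theorem log_sqrt_div_two_add_eulerMascheroniConstant {ω : ℝ} (hω : 0 < ω) :
    log (√ω / 2) + eulerMascheroniConstant =
      log (ω / (4 * exp (-2 * eulerMascheroniConstant))) / 2 := by
  rw [log_div (by positivity) (by norm_num), log_sqrt hω.le,
    log_div hω.ne' (by positivity), log_mul (by norm_num) (exp_ne_zero _), log_exp,
    show (4 : ℝ) = 2 ^ 2 by norm_num, log_pow]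
  push_cast
  ring

theorem rpow_sq_div_mul_exp {σ c t D : ℝ} (hc : 0 ≤ c) (ht : 0 ≤ t) :
    ((t / c) ^ (1 / (2 * σ))) ^ 2 / (D * exp (2 * t)) =
      (c ^ (1 / σ) * D)⁻¹ * (t ^ (1 / σ) * exp (-2 * t)) := by
  rw [← rpow_natCast, ← rpow_mul (div_nonneg ht hc), div_rpow ht hc, neg_mul, exp_neg]
  push_cast
  rw [show 1 / (2 * σ) * 2 = 1 / σ by ring]
  ring

section Profile

variable {A p : ℝ}

noncomputable def boundStateProfile (A p ω : ℝ) : ℝ :=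
  (log (ω / A) / 2) ^ p * exp (-2 * (log (ω / A) / 2))

theorem strictMonoOn_half_log_div (hA : 0 < A) :
    StrictMonoOn (fun ω => log (ω / A) / 2) (Ioi 0) := fun _ hx _ _ hxy =>
  div_lt_div_of_pos_right (log_lt_log (div_pos hx hA) (div_lt_div_of_pos_right hxy hA)) two_pos

theorem boundStateProfile_strictMonoOn (hA : 0 < A) (hp : 0 < p) :
    StrictMonoOn (boundStateProfile A p) (Icc A (A * exp p)) := by
  have hℓ := (strictMonoOn_half_log_div hA).mono
    fun _ (h : _ ∈ Icc A (A * exp p)) => hA.trans_le h.1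
  have hmaps := hℓ.monotoneOn.mapsTo_Icc
  simp only [div_self hA.ne', log_one, zero_div, mul_div_cancel_left₀ _ hA.ne', log_exp] at hmaps
  exact (strictMonoOn_rpow_mul_exp_neg_mul hp two_pos).comp hℓ hmaps

theorem boundStateProfile_strictAntiOn (hA : 0 < A) (hp : 0 < p) :
    StrictAntiOn (boundStateProfile A p) (Ici (A * exp p)) := by
  have hℓ := (strictMonoOn_half_log_div hA).mono fun _ (h : _ ∈ Ici (A * exp p)) =>
    mul_pos hA (exp_pos p) |>.trans_le h
  have hmaps := hℓ.monotoneOn.mapsTo_Ici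
  simp only [mul_div_cancel_left₀ _ hA.ne', log_exp] at hmaps
  exact (strictAntiOn_rpow_mul_exp_neg_mul hp two_pos).comp_strictMonoOn hℓ hmaps

theorem tendsto_boundStateProfile_nhdsGT (hA : 0 < A) (hp : 0 < p) :
    Tendsto (boundStateProfile A p) (𝓝[>] A) (𝓝 0) := by
  have hℓ : ContinuousAt (fun ω => log (ω / A) / 2) A :=
    ((continuousAt_log (by simp [hA.ne'])).comp (continuousAt_id.div_const A)).div_const 2
  have hℓA : log (A / A) / 2 = 0 := by simp [hA.ne']
  exact (tendsto_rpow_mul_exp_neg_mul_nhds_zero hp).comp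
    (hℓA ▸ hℓ.tendsto.mono_left nhdsWithin_le_nhds)

theorem tendsto_boundStateProfile_atTop (hA : 0 < A) :
    Tendsto (boundStateProfile A p) atTop (𝓝 0) :=
  (tendsto_rpow_mul_exp_neg_mul_atTop_nhds_zero p 2 two_pos).comp
    ((tendsto_log_atTop.comp (tendsto_id.atTop_div_const hA)).atTop_div_const two_pos)

end Profile

theorem bound_state_mass_eq {σ c ω : ℝ} (hc : 0 ≤ c)
    (hω : 4 * exp (-2 * eulerMascheroniConstant) ≤ ω) :
    (((log (√ω / 2) + eulerMascheroniConstant) / c) ^ (1 / (2 * σ))) ^ 2 / (4 * π * ω) =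
      (c ^ (1 / σ) * (4 * π * (4 * exp (-2 * eulerMascheroniConstant))))⁻¹ *
        boundStateProfile (4 * exp (-2 * eulerMascheroniConstant)) (1 / σ) ω := by
  set A := 4 * exp (-2 * eulerMascheroniConstant)
  have hA : 0 < A := by positivity
  have hℓ : 0 ≤ log (ω / A) / 2 := div_nonneg (log_nonneg ((one_le_div hA).2 hω)) zero_le_two
  rw [boundStateProfile, log_sqrt_div_two_add_eulerMascheroniConstant (hA.trans_le hω),
    ← rpow_sq_div_mul_exp hc hℓ,
    mul_div_cancel₀ _ two_ne_zero, exp_log (div_pos (hA.trans_le hω) hA), mul_assoc (4 * π),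
    mul_div_cancel₀ _ hA.ne']

/-- Qualitative behavior of the 2D bound-state mass
`M(ω) = q(ω)²/(4πω)`, `q(ω) = ((log(√ω/2)+γ)/(-2πβ))^{1/(2σ)}`, for `β < 0`:
strictly increasing on `(4e^{-2γ}, 4e^{-2γ+1/σ}]`, strictly decreasing on
`[4e^{-2γ+1/σ}, ∞)`, and vanishing in the limits `ω → 4e^{-2γ}` and `ω → ∞`. -/
theorem bound_state_mass_2d (σ β : ℝ) (hσ : 0 < σ) (hβ : β < 0)
    (q M : ℝ → ℝ)
    (hq : ∀ ω, q ω = ((Real.log (Real.sqrt ω / 2) + Real.eulerMascheroniConstant)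
                        / (-2 * Real.pi * β)) ^ (1 / (2 * σ)))
    (hM : ∀ ω, M ω = (q ω) ^ 2 / (4 * Real.pi * ω)) :
    StrictMonoOn M
      (Ioc (4 * Real.exp (-2 * Real.eulerMascheroniConstant))
           (4 * Real.exp (-2 * Real.eulerMascheroniConstant + 1 / σ))) ∧
    StrictAntiOn M
      (Ici (4 * Real.exp (-2 * Real.eulerMascheroniConstant + 1 / σ))) ∧
    Tendsto M
      (nhdsWithin (4 * Real.exp (-2 * Real.eulerMascheroniConstant))
        (Ioi (4 * Real.exp (-2 * Real.eulerMascheroniConstant)))) (nhds 0) ∧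
    Tendsto M atTop (nhds 0) := by
  set A := 4 * exp (-2 * eulerMascheroniConstant)
  have hA : 0 < A := by positivity
  have hp : 0 < 1 / σ := by positivity
  have hc : 0 < -2 * π * β := mul_pos_of_neg_of_neg (by linarith [pi_pos]) hβ
  have hB : 4 * exp (-2 * eulerMascheroniConstant + 1 / σ) = A * exp (1 / σ) := by
    rw [exp_add, mul_assoc]
  obtain ⟨K, hK, hMK⟩ : ∃ K > 0, EqOn M (fun ω => K * boundStateProfile A (1 / σ) ω) (Ici A) :=
    ⟨((-2 * π * β) ^ (1 / σ) * (4 * π * A))⁻¹, by positivity,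
      fun ω hω => by rw [hM, hq]; exact bound_state_mass_eq hc.le hω⟩
  have hK' := strictMono_mul_left_of_pos hK
  have hAB : Ici (A * exp (1 / σ)) ⊆ Ici A :=
    Ici_subset_Ici.2 (le_mul_of_one_le_right hA.le (one_le_exp hp.le))
  rw [hB]
  refine ⟨?_, ?_, ?_, ?_⟩
  · exact (hK'.comp_strictMonoOn (boundStateProfile_strictMonoOn hA hp) |>.mono
      Ioc_subset_Icc_self).congr (hMK.mono fun _ h => h.1.le).symm
  · exact (hK'.comp_strictAntiOn (boundStateProfile_strictAntiOn hA hp)).congr (hMK.mono hAB).symm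
  · refine (mul_zero K ▸ (tendsto_boundStateProfile_nhdsGT hA hp).const_mul K).congr' ?_
    filter_upwards [self_mem_nhdsWithin] with ω hω using (hMK (mem_Ici.2 hω.le)).symm
  · refine (mul_zero K ▸ (tendsto_boundStateProfile_atTop (p := 1 / σ) hA).const_mul K).congr' ?_
    filter_upwards [eventually_ge_atTop A] with ω hω using (hMK hω).symm
end
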